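/- arXiv:2004.09490 — 2 statements merged into one kernel-verified Lean document; each statement's English description precedes it below -/
import Mathlib

section
/- Uniform bounds independent of ε (Lemma 3.2): Let T > 0, let the initial data u₀ be such that each u₀^e is twice continuously differentiable on [0,ℓ^e], u₀ is continuous across vertices, and let the boundary data g^v, v ∈ V∂, be twice continuously differentiable on [0,T] with the compatibility conditions of Theorem 2.1. Then there exists a constant C_u, depending only on the network, the coefficients a^e, b^e, the initial data u₀, the boundary data g and T — but not on the diffusion coefficients ε^e ∈ (0,1] — such that the classical solution u_ε of the convection–diffusion network problem satisfies |u_ε^e(x,t)| + |∂_t u_ε^e(x,t)| ≤ C_u for all x ∈ [0,ℓ^e], e ∈ E, and t ∈ [0,T]. -/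
/-!
Weak maximum principle for `w = u - x (x - ℓ) / ℓ - λ t`, where `a λ > b + 2 / ℓ` on every edge.
At an interior maximum with `t > 0` the equation would give `a λ ≤ a uₜ = ε uₓₓ - b uₓ ≤ 2 / ℓ + b`;
at an inner vertex the parabola forces every outward slope to be at least `1`, so the diffusive
flux is positive, against the Kirchhoff condition. Hence `|u|` is bounded by the data plus
`ℓ / 4 + λ T`, and only `ε ≤ 1` was used. Time difference quotients of `u` solve the same problem:
their initial values are controlled through the equation at `t = 0` by `|u₀''| + b |u₀'|`
(again with `ε ≤ 1`) and their boundary values by `g'`, which bounds `∂ₜ u`.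
-/

open Set Finset

/-- Coordinate of vertex `v` on edge `e`: `0` at the start vertex, `ℓ e` at the end vertex. -/
def endCoord {E V : Type} [DecidableEq V] (src : E → V) (ℓ : E → ℝ) (e : E) (v : V) : ℝ :=
  if src e = v then 0 else ℓ e

/-- Signed incidence number `n^e(v)`: `-1` at the start vertex, `+1` at the end vertex,
`0` otherwise. -/
def inc {E V : Type} [DecidableEq V] (src tgt : E → V) (e : E) (v : V) : ℝ :=
  (if tgt e = v then (1 : ℝ) else 0) - (if src e = v then (1 : ℝ) else 0)

/-- Number of edges incident to the vertex `v`. -/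
def edgeDeg {E V : Type} [Fintype E] [DecidableEq V] (src tgt : E → V) (v : V) : ℕ :=
  (Finset.univ.filter (fun e => src e = v ∨ tgt e = v)).card

/-- A classical solution of the convection–diffusion problem on the network with edges `E`,
vertices `V`, edge lengths `ℓ`, coefficients `a`, `b`, diffusion `eps`, time horizon `T`,
initial data `u0` and boundary data `g`.  The fields `ux`, `uxx`, `ut` are the spatial and
temporal derivatives of `u`, and `uhat` are the common nodal values. -/
structure CDSol (E V : Type) [Fintype E] [Fintype V] [DecidableEq E] [DecidableEq V]
    (src tgt : E → V) (ℓ a b eps : E → ℝ) (T : ℝ)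
    (u0 : E → ℝ → ℝ) (g : V → ℝ → ℝ) : Type where
  u : E → ℝ → ℝ → ℝ
  ux : E → ℝ → ℝ → ℝ
  uxx : E → ℝ → ℝ → ℝ
  ut : E → ℝ → ℝ → ℝ
  uhat : V → ℝ → ℝ
  cont_u : ∀ e, ContinuousOn (fun p : ℝ × ℝ => u e p.1 p.2) (Set.Icc 0 (ℓ e) ×ˢ Set.Icc 0 T)
  cont_ux : ∀ e, ContinuousOn (fun p : ℝ × ℝ => ux e p.1 p.2) (Set.Icc 0 (ℓ e) ×ˢ Set.Icc 0 T)
  cont_uxx : ∀ e, ContinuousOn (fun p : ℝ × ℝ => uxx e p.1 p.2) (Set.Icc 0 (ℓ e) ×ˢ Set.Icc 0 T)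
  cont_ut : ∀ e, ContinuousOn (fun p : ℝ × ℝ => ut e p.1 p.2) (Set.Icc 0 (ℓ e) ×ˢ Set.Icc 0 T)
  hasDeriv_x : ∀ e, ∀ t ∈ Set.Icc (0 : ℝ) T, ∀ x ∈ Set.Icc (0 : ℝ) (ℓ e),
      HasDerivWithinAt (fun y => u e y t) (ux e x t) (Set.Icc 0 (ℓ e)) x
  hasDeriv_xx : ∀ e, ∀ t ∈ Set.Icc (0 : ℝ) T, ∀ x ∈ Set.Icc (0 : ℝ) (ℓ e),
      HasDerivWithinAt (fun y => ux e y t) (uxx e x t) (Set.Icc 0 (ℓ e)) x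
  hasDeriv_t : ∀ e, ∀ x ∈ Set.Icc (0 : ℝ) (ℓ e), ∀ t ∈ Set.Icc (0 : ℝ) T,
      HasDerivWithinAt (fun s => u e x s) (ut e x t) (Set.Icc 0 T) t
  pde : ∀ e, ∀ x ∈ Set.Icc (0 : ℝ) (ℓ e), ∀ t ∈ Set.Icc (0 : ℝ) T,
      a e * ut e x t + b e * ux e x t = eps e * uxx e x t
  vertex_continuity : ∀ (v : V) (e : E), (src e = v ∨ tgt e = v) → ∀ t ∈ Set.Icc (0 : ℝ) T,
      u e (endCoord src ℓ e v) t = uhat v t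
  coupling : ∀ v : V, 2 ≤ edgeDeg src tgt v → ∀ t ∈ Set.Icc (0 : ℝ) T,
      ∑ e, (b e * u e (endCoord src ℓ e v) t - eps e * ux e (endCoord src ℓ e v) t)
        * inc src tgt e v = 0
  bdry : ∀ v : V, edgeDeg src tgt v = 1 → ∀ t ∈ Set.Icc (0 : ℝ) T, uhat v t = g v t
  init : ∀ e, ∀ x ∈ Set.Icc (0 : ℝ) (ℓ e), u e x 0 = u0 e x

open Filter Topology

theorem IsMaxOn.sub_mul_hasDerivWithinAt_nonpos {f : ℝ → ℝ} {s : Set ℝ} {a b f' : ℝ}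
    (h : IsMaxOn f s a) (hf : HasDerivWithinAt f f' s a) (hab : segment ℝ a b ⊆ s) :
    (b - a) * f' ≤ 0 := by
  simpa using h.localize.hasFDerivWithinAt_nonpos hf.hasFDerivWithinAt
    (sub_mem_posTangentConeAt_of_segment_subset hab)

theorem IsLocalMax.nonpos_of_hasDerivAt_deriv {f f' : ℝ → ℝ} {x₀ f'' : ℝ}
    (h : IsLocalMax f x₀) (hf : ∀ᶠ x in 𝓝 x₀, HasDerivAt f (f' x) x)
    (hf' : HasDerivAt f' f'' x₀) : f'' ≤ 0 := by
  -- if `f'' > 0`, the second-derivative test makes `x₀` also a local minimum, so `f` is locally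
  -- constant and `f'' = 0`
  by_contra! hpos
  have hderiv : deriv f =ᶠ[𝓝 x₀] f' := hf.mono fun x hx => hx.deriv
  have hsecond : deriv (deriv f) x₀ = f'' := hderiv.deriv_eq.trans hf'.deriv
  have hmin : IsLocalMin f x₀ := isLocalMin_of_deriv_deriv_pos (hsecond ▸ hpos)
    h.deriv_eq_zero hf.self_of_nhds.continuousAt
  have hconst : f =ᶠ[𝓝 x₀] fun _ => f x₀ := by
    filter_upwards [h, hmin] with x hmax hmin using le_antisymm hmax hmin
  have hderiv0 : deriv f =ᶠ[𝓝 x₀] fun _ => 0 :=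
    hconst.eventuallyEq_nhds.mono fun x hx => hx.deriv_eq.trans (deriv_const x _)
  rw [hderiv0.deriv_eq, deriv_const] at hsecond
  linarith

theorem HasDerivWithinAt.abs_le_of_eventually_abs_slope_le {f : ℝ → ℝ} {f' : ℝ} {s : Set ℝ}
    {x M : ℝ} (hf : HasDerivWithinAt f f' s x) (hx : AccPt x (𝓟 s))
    (h : ∀ᶠ y in 𝓝[s \ {x}] x, |slope f x y| ≤ M) : |f'| ≤ M :=
  have := accPt_principal_iff_nhdsWithin.1 hx
  le_of_tendsto (hasDerivWithinAt_iff_tendsto_slope.1 hf).abs h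

theorem exists_forall_le_of_isCompact {ι α β : Type*} [Finite ι] [Nonempty ι] [TopologicalSpace α]
    [TopologicalSpace β] [LinearOrder β] [ClosedIciTopology β] {s : ι → Set α}
    (hs : ∀ i, IsCompact (s i)) (hne : ∀ i, (s i).Nonempty) {f : ι → α → β}
    (hf : ∀ i, ContinuousOn (f i) (s i)) :
    ∃ i₀, ∃ p₀ ∈ s i₀, ∀ i, ∀ p ∈ s i, f i p ≤ f i₀ p₀ := by
  choose p hp hmax using fun i => (hs i).exists_isMaxOn (hne i) (hf i)
  obtain ⟨i₀, hi₀⟩ := Finite.exists_max fun i => f i (p i)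
  exact ⟨i₀, p i₀, hp i₀, fun i q hq => (hmax i hq).trans (hi₀ i)⟩

theorem exists_pos_forall_abs_le_add {ι : Type*} [Finite ι] {ℓ : ι → ℝ} {T K η : ℝ}
    {f : ι → ℝ → ℝ → ℝ}
    (hf : ∀ i, ContinuousOn (fun p : ℝ × ℝ => f i p.1 p.2) (Icc 0 (ℓ i) ×ˢ Icc 0 T))
    (hT : 0 ≤ T) (hη : 0 < η) (hK : ∀ i, ∀ x ∈ Icc 0 (ℓ i), |f i x 0| ≤ K) :
    ∃ δ > 0, ∀ i, ∀ x ∈ Icc 0 (ℓ i), ∀ t ∈ Icc 0 T, t < δ → |f i x t| ≤ K + η := by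
  have hev : ∀ i, ∀ᶠ δ in 𝓝[>] (0 : ℝ),
      ∀ x ∈ Icc 0 (ℓ i), ∀ t ∈ Icc 0 T, t < δ → |f i x t| ≤ K + η := by
    intro i
    obtain ⟨δ, hδ, hclose⟩ := Metric.uniformContinuousOn_iff.1
      ((isCompact_Icc.prod isCompact_Icc).uniformContinuousOn_of_continuous (hf i)) η hη
    filter_upwards [Ioo_mem_nhdsGT hδ] with δ' hδ' x hx t ht htδ'
    have hdist : dist (x, t) (x, 0) < δ := by
      rw [Prod.dist_eq, dist_self, Real.dist_eq, sub_zero, abs_of_nonneg ht.1]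
      exact max_lt hδ (htδ'.trans hδ'.2)
    have hclose' := hclose (x, t) ⟨hx, ht⟩ (x, 0) ⟨hx, le_rfl, hT⟩ hdist
    rw [Real.dist_eq] at hclose'
    linarith [abs_sub_abs_le_abs_sub (f i x t) (f i x 0), hK i x hx]
  obtain ⟨δ, hδ, hδ_pos⟩ := ((Filter.eventually_all.2 hev).and self_mem_nhdsWithin).exists
  exact ⟨δ, hδ_pos, hδ⟩

theorem exists_lt_mul_of_pos {ι : Type*} [Finite ι] (c : ι → ℝ) {a : ι → ℝ}
    (ha : ∀ i, 0 < a i) : ∃ lam, ∀ i, c i < a i * lam := by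
  obtain ⟨M, hM⟩ := Finite.exists_le fun i => c i / a i
  exact ⟨M + 1, fun i => by linarith [(div_le_iff₀' (ha i)).1 (hM i), ha i]⟩

theorem exists_abs_le_of_continuousOn {ι : Type*} [Finite ι] {ℓ : ι → ℝ} {f : ι → ℝ → ℝ}
    (hf : ∀ i, ContinuousOn (f i) (Icc 0 (ℓ i))) : ∃ K, ∀ i, ∀ x ∈ Icc 0 (ℓ i), |f i x| ≤ K := by
  choose K hK using fun i => isCompact_Icc.exists_bound_of_continuousOn (hf i)
  obtain ⟨M, hM⟩ := Finite.exists_le K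
  exact ⟨M, fun i x hx => (hK i x hx).trans (hM i)⟩

theorem exists_abs_sub_le_mul_of_contDiffOn {ι : Type*} [Finite ι] {T : ℝ} (hT : 0 < T)
    {g : ι → ℝ → ℝ} (hg : ∀ i, ContDiffOn ℝ 1 (g i) (Icc 0 T)) :
    ∃ K, ∀ i, ∀ s ∈ Icc 0 T, ∀ t ∈ Icc 0 T, |g i s - g i t| ≤ K * |s - t| := by
  obtain ⟨K, hK⟩ := exists_abs_le_of_continuousOn (ℓ := fun _ => T)
    fun i => (hg i).continuousOn_derivWithin (uniqueDiffOn_Icc hT) le_rfl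
  exact ⟨K, fun i s hs t ht => (convex_Icc 0 T).norm_image_sub_le_of_norm_derivWithin_le
    ((hg i).differentiableOn one_ne_zero) (hK i) ht hs⟩

noncomputable def parabola (ℓ x : ℝ) : ℝ := x * (x - ℓ) / ℓ

@[fun_prop]
lemma continuous_parabola (ℓ : ℝ) : Continuous (parabola ℓ) := by
  unfold parabola
  fun_prop

lemma hasDerivAt_parabola (ℓ x : ℝ) : HasDerivAt (parabola ℓ) ((2 * x - ℓ) / ℓ) x := by
  have h := ((hasDerivAt_id x).mul ((hasDerivAt_id x).sub_const ℓ)).div_const ℓ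
  exact h.congr_deriv (by simp only [id]; ring)

lemma parabola_nonpos {ℓ x : ℝ} (hx : x ∈ Icc 0 ℓ) : parabola ℓ x ≤ 0 :=
  div_nonpos_of_nonpos_of_nonneg (mul_nonpos_of_nonneg_of_nonpos hx.1 (by linarith [hx.2]))
    (hx.1.trans hx.2)

lemma neg_quarter_le_parabola {ℓ : ℝ} (hℓ : 0 < ℓ) (x : ℝ) : -(ℓ / 4) ≤ parabola ℓ x := by
  rw [parabola, le_div_iff₀ hℓ]
  nlinarith [sq_nonneg (2 * x - ℓ)]

section Incidence

variable {E V : Type} [DecidableEq V] {src tgt : E → V} {ℓ : E → ℝ} {e : E} {v : V}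

lemma endCoord_mem_Icc (hℓ : 0 ≤ ℓ e) : endCoord src ℓ e v ∈ Icc 0 (ℓ e) := by
  unfold endCoord
  split_ifs
  exacts [⟨le_rfl, hℓ⟩, ⟨hℓ, le_rfl⟩]

lemma parabola_endCoord : parabola (ℓ e) (endCoord src ℓ e v) = 0 := by
  unfold endCoord parabola
  split_ifs <;> simp

lemma inc_eq_zero (h : ¬(src e = v ∨ tgt e = v)) : inc src tgt e v = 0 := by
  simp only [not_or] at h
  simp [inc, h.1, h.2]

lemma inc_mul_self (hne : src e ≠ tgt e) (h : src e = v ∨ tgt e = v) :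
    inc src tgt e v * inc src tgt e v = 1 := by
  rcases h with rfl | rfl <;> simp [inc, hne, hne.symm]

lemma two_mul_endCoord_sub (hne : src e ≠ tgt e) (h : src e = v ∨ tgt e = v) :
    2 * endCoord src ℓ e v - ℓ e = ℓ e * inc src tgt e v := by
  rcases h with rfl | rfl <;> simp [endCoord, inc, hne, hne.symm]
  ring

lemma one_le_edgeDeg [Fintype E] (hev : src e = v ∨ tgt e = v) : 1 ≤ edgeDeg src tgt v :=
  Finset.card_pos.2 ⟨e, Finset.mem_filter.2 ⟨Finset.mem_univ e, hev⟩⟩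

end Incidence

section NetworkSolution

variable {E V : Type} [Fintype E] [DecidableEq V] {src tgt : E → V} {ℓ a b eps : E → ℝ}
  {T : ℝ} {u ux uxx ut : E → ℝ → ℝ → ℝ} {uhat : V → ℝ → ℝ}

variable (src tgt ℓ a b eps T u ux uxx ut uhat) in
/-- Equations (i)–(iii) on `[0, T]`, without initial or boundary conditions, so that the class is
closed under linear combinations and time shifts. -/
structure IsNetworkSolution : Prop where
  cont_u : ∀ e, ContinuousOn (fun p : ℝ × ℝ => u e p.1 p.2) (Icc 0 (ℓ e) ×ˢ Icc 0 T)
  hasDeriv_x : ∀ e, ∀ t ∈ Icc (0 : ℝ) T, ∀ x ∈ Icc (0 : ℝ) (ℓ e),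
    HasDerivWithinAt (fun y => u e y t) (ux e x t) (Icc 0 (ℓ e)) x
  hasDeriv_xx : ∀ e, ∀ t ∈ Icc (0 : ℝ) T, ∀ x ∈ Icc (0 : ℝ) (ℓ e),
    HasDerivWithinAt (fun y => ux e y t) (uxx e x t) (Icc 0 (ℓ e)) x
  hasDeriv_t : ∀ e, ∀ x ∈ Icc (0 : ℝ) (ℓ e), ∀ t ∈ Icc (0 : ℝ) T,
    HasDerivWithinAt (fun s => u e x s) (ut e x t) (Icc 0 T) t
  pde : ∀ e, ∀ x ∈ Icc (0 : ℝ) (ℓ e), ∀ t ∈ Icc (0 : ℝ) T,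
    a e * ut e x t + b e * ux e x t = eps e * uxx e x t
  vertex_continuity : ∀ (v : V) (e : E), (src e = v ∨ tgt e = v) → ∀ t ∈ Icc (0 : ℝ) T,
    u e (endCoord src ℓ e v) t = uhat v t
  coupling : ∀ v : V, 2 ≤ edgeDeg src tgt v → ∀ t ∈ Icc (0 : ℝ) T,
    ∑ e, (b e * u e (endCoord src ℓ e v) t - eps e * ux e (endCoord src ℓ e v) t)
      * inc src tgt e v = 0

namespace IsNetworkSolution

variable (hsol : IsNetworkSolution src tgt ℓ a b eps T u ux uxx ut uhat)
include hsol

theorem const_mul (c : ℝ) :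
    IsNetworkSolution src tgt ℓ a b eps T (fun e x t => c * u e x t) (fun e x t => c * ux e x t)
      (fun e x t => c * uxx e x t) (fun e x t => c * ut e x t) (fun v t => c * uhat v t) where
  cont_u e := (hsol.cont_u e).const_smul c
  hasDeriv_x e t ht x hx := (hsol.hasDeriv_x e t ht x hx).const_mul c
  hasDeriv_xx e t ht x hx := (hsol.hasDeriv_xx e t ht x hx).const_mul c
  hasDeriv_t e x hx t ht := (hsol.hasDeriv_t e x hx t ht).const_mul c
  pde e x hx t ht := by linear_combination c * hsol.pde e x hx t ht
  vertex_continuity v e hev t ht := by rw [hsol.vertex_continuity v e hev t ht]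
  coupling v hv t ht := by
    rw [← mul_zero c, ← hsol.coupling v hv t ht, Finset.mul_sum]
    exact Finset.sum_congr rfl fun e _ => by ring

theorem sub {u' ux' uxx' ut' : E → ℝ → ℝ → ℝ} {uhat' : V → ℝ → ℝ}
    (hsol' : IsNetworkSolution src tgt ℓ a b eps T u' ux' uxx' ut' uhat') :
    IsNetworkSolution src tgt ℓ a b eps T (fun e x t => u e x t - u' e x t)
      (fun e x t => ux e x t - ux' e x t) (fun e x t => uxx e x t - uxx' e x t)
      (fun e x t => ut e x t - ut' e x t) (fun v t => uhat v t - uhat' v t) where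
  cont_u e := (hsol.cont_u e).sub (hsol'.cont_u e)
  hasDeriv_x e t ht x hx := (hsol.hasDeriv_x e t ht x hx).sub (hsol'.hasDeriv_x e t ht x hx)
  hasDeriv_xx e t ht x hx := (hsol.hasDeriv_xx e t ht x hx).sub (hsol'.hasDeriv_xx e t ht x hx)
  hasDeriv_t e x hx t ht := (hsol.hasDeriv_t e x hx t ht).sub (hsol'.hasDeriv_t e x hx t ht)
  pde e x hx t ht := by linear_combination hsol.pde e x hx t ht - hsol'.pde e x hx t ht
  vertex_continuity v e hev t ht := by
    rw [hsol.vertex_continuity v e hev t ht, hsol'.vertex_continuity v e hev t ht]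
  coupling v hv t ht := by
    have h := sub_eq_zero_of_eq ((hsol.coupling v hv t ht).trans (hsol'.coupling v hv t ht).symm)
    rw [← Finset.sum_sub_distrib] at h
    exact (Finset.sum_congr rfl fun e _ => by ring).trans h

theorem mono {T' : ℝ} (hT' : T' ≤ T) :
    IsNetworkSolution src tgt ℓ a b eps T' u ux uxx ut uhat :=
  have hsub : Icc 0 T' ⊆ Icc 0 T := Icc_subset_Icc_right hT'
  { cont_u := fun e => (hsol.cont_u e).mono (prod_mono subset_rfl hsub)
    hasDeriv_x := fun e t ht => hsol.hasDeriv_x e t (hsub ht)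
    hasDeriv_xx := fun e t ht => hsol.hasDeriv_xx e t (hsub ht)
    hasDeriv_t := fun e x hx t ht => (hsol.hasDeriv_t e x hx t (hsub ht)).mono hsub
    pde := fun e x hx t ht => hsol.pde e x hx t (hsub ht)
    vertex_continuity := fun v e hev t ht => hsol.vertex_continuity v e hev t (hsub ht)
    coupling := fun v hv t ht => hsol.coupling v hv t (hsub ht) }

theorem comp_add_const {h : ℝ} (hh : 0 ≤ h) :
    IsNetworkSolution src tgt ℓ a b eps (T - h) (fun e x t => u e x (t + h))
      (fun e x t => ux e x (t + h)) (fun e x t => uxx e x (t + h)) (fun e x t => ut e x (t + h))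
      (fun v t => uhat v (t + h)) :=
  have hshift : MapsTo (· + h) (Icc 0 (T - h)) (Icc 0 T) := fun t ht =>
    ⟨by linarith [ht.1], by linarith [ht.2]⟩
  { cont_u := fun e => (hsol.cont_u e).comp (f := fun p : ℝ × ℝ => (p.1, p.2 + h))
      (by fun_prop) (fun p hp => ⟨hp.1, hshift hp.2⟩)
    hasDeriv_x := fun e t ht => hsol.hasDeriv_x e (t + h) (hshift ht)
    hasDeriv_xx := fun e t ht => hsol.hasDeriv_xx e (t + h) (hshift ht)
    hasDeriv_t := fun e x hx t ht => by
      simpa [Function.comp_def] using (hsol.hasDeriv_t e x hx (t + h) (hshift ht)).comp t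
        ((hasDerivWithinAt_id t _).add_const h) hshift
    pde := fun e x hx t ht => hsol.pde e x hx (t + h) (hshift ht)
    vertex_continuity := fun v e hev t ht => hsol.vertex_continuity v e hev (t + h) (hshift ht)
    coupling := fun v hv t ht => hsol.coupling v hv (t + h) (hshift ht) }

theorem sum_eps_mul_flux_eq_zero {v : V} (hflow : ∑ e, b e * inc src tgt e v = 0)
    (hv : 2 ≤ edgeDeg src tgt v) {t : ℝ} (ht : t ∈ Icc 0 T) :
    ∑ e, eps e * (ux e (endCoord src ℓ e v) t * inc src tgt e v) = 0 := by
  have hterm : ∀ e,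
      (b e * u e (endCoord src ℓ e v) t - eps e * ux e (endCoord src ℓ e v) t) * inc src tgt e v =
        uhat v t * (b e * inc src tgt e v) -
          eps e * (ux e (endCoord src ℓ e v) t * inc src tgt e v) := by
    intro e
    by_cases hev : src e = v ∨ tgt e = v
    · rw [hsol.vertex_continuity v e hev t ht]; ring
    · rw [inc_eq_zero hev]; ring
  have h := hsol.coupling v hv t ht
  simpa only [hterm, Finset.sum_sub_distrib, ← Finset.mul_sum, hflow, mul_zero, zero_sub,
    neg_eq_zero] using h

theorem false_of_max_at_inner_vertex (hne : ∀ e, src e ≠ tgt e) (hℓ : ∀ e, 0 < ℓ e)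
    (heps : ∀ e, 0 < eps e) {v : V} (hflow : ∑ e, b e * inc src tgt e v = 0)
    (hv : 2 ≤ edgeDeg src tgt v) {t : ℝ} (ht : t ∈ Icc 0 T)
    (hmax : ∀ e, ∀ x ∈ Icc 0 (ℓ e), u e x t - parabola (ℓ e) x ≤ uhat v t) : False := by
  have houtward : ∀ e, (src e = v ∨ tgt e = v) →
      1 ≤ ux e (endCoord src ℓ e v) t * inc src tgt e v := by
    intro e hev
    set c := endCoord src ℓ e v
    have hc : c ∈ Icc 0 (ℓ e) := endCoord_mem_Icc (hℓ e).le
    have hcmax : IsMaxOn (fun y => u e y t - parabola (ℓ e) y) (Icc 0 (ℓ e)) c := fun y hy => by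
      simpa [c, hsol.vertex_continuity v e hev t ht, parabola_endCoord] using hmax e y hy
    have hderiv := (hsol.hasDeriv_x e t ht c hc).sub (hasDerivAt_parabola (ℓ e) c).hasDerivWithinAt
    have hslope := hcmax.sub_mul_hasDerivWithinAt_nonpos hderiv
      ((convex_Icc 0 (ℓ e)).segment_subset hc
        (show ℓ e - c ∈ Icc 0 (ℓ e) from ⟨by linarith [hc.2], by linarith [hc.1]⟩))
    have h2c : 2 * c - ℓ e = ℓ e * inc src tgt e v := two_mul_endCoord_sub (hne e) hev
    rw [h2c, mul_div_cancel_left₀ _ (hℓ e).ne'] at hslope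
    have hscaled : 0 ≤ ℓ e * (ux e c t * inc src tgt e v - 1) := by
      linear_combination hslope - ℓ e * inc_mul_self (hne e) hev
        + (ux e c t - inc src tgt e v) * h2c
    linarith [(mul_nonneg_iff_of_pos_left (hℓ e)).1 hscaled]
  have hpos : 0 < ∑ e, eps e * (ux e (endCoord src ℓ e v) t * inc src tgt e v) := by
    obtain ⟨e, he⟩ := Finset.card_pos.1 (lt_of_lt_of_le two_pos hv)
    refine Finset.sum_pos' (fun e _ => ?_) ⟨e, Finset.mem_univ e, ?_⟩
    · by_cases hev : src e = v ∨ tgt e = v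
      · nlinarith [heps e, houtward e hev]
      · simp [inc_eq_zero hev]
    · nlinarith [heps e, houtward e (Finset.mem_filter.1 he).2]
  exact hpos.ne' (hsol.sum_eps_mul_flux_eq_zero hflow hv ht)

theorem false_of_interior_max {e : E} (hℓ : 0 < ℓ e) (ha : 0 < a e) (hb : 0 < b e)
    (heps : 0 ≤ eps e ∧ eps e ≤ 1) {lam : ℝ} (hlam : b e + 2 / ℓ e < a e * lam)
    {x t : ℝ} (hx : x ∈ Ioo 0 (ℓ e)) (ht : t ∈ Ioc 0 T)
    (hmax_x : IsMaxOn (fun y => u e y t - parabola (ℓ e) y) (Icc 0 (ℓ e)) x)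
    (hmax_t : IsMaxOn (fun s => u e x s - lam * s) (Icc 0 T) t) : False := by
  have hx' : x ∈ Icc 0 (ℓ e) := Ioo_subset_Icc_self hx
  have ht' : t ∈ Icc 0 T := Ioc_subset_Icc_self ht
  have hnhds : Icc 0 (ℓ e) ∈ 𝓝 x := Icc_mem_nhds hx.1 hx.2
  have hderiv : ∀ᶠ y in 𝓝 x, HasDerivAt (fun y => u e y t - parabola (ℓ e) y)
      (ux e y t - (2 * y - ℓ e) / ℓ e) y := by
    filter_upwards [isOpen_Ioo.mem_nhds hx] with y hy
    exact ((hsol.hasDeriv_x e t ht' y (Ioo_subset_Icc_self hy)).hasDerivAt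
      (Icc_mem_nhds hy.1 hy.2)).sub (hasDerivAt_parabola (ℓ e) y)
  have hlocal : IsLocalMax (fun y => u e y t - parabola (ℓ e) y) x := hmax_x.isLocalMax hnhds
  have hux : ux e x t = (2 * x - ℓ e) / ℓ e :=
    sub_eq_zero.1 (hlocal.hasDerivAt_eq_zero hderiv.self_of_nhds)
  have huxx : uxx e x t - 2 / ℓ e ≤ 0 := by
    refine hlocal.nonpos_of_hasDerivAt_deriv hderiv
      (((hsol.hasDeriv_xx e t ht' x hx').hasDerivAt hnhds).sub ?_)
    exact ((((hasDerivAt_id x).const_mul 2).sub_const (ℓ e)).div_const (ℓ e)).congr_deriv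
      (by simp)
  have hut : lam ≤ ut e x t := by
    have h := hmax_t.sub_mul_hasDerivWithinAt_nonpos
      ((hsol.hasDeriv_t e x hx' t ht').sub ((hasDerivWithinAt_id t _).const_mul lam))
      ((convex_Icc 0 T).segment_subset ht' ⟨le_rfl, ht.1.le.trans ht.2⟩)
    nlinarith [ht.1]
  have hux_ge : -1 ≤ ux e x t := by
    rw [hux, le_div_iff₀ hℓ]; linarith [hx.1]
  have heps_uxx : eps e * uxx e x t ≤ 2 / ℓ e := by
    have h2ℓ : 0 < 2 / ℓ e := by positivity
    rcases le_or_gt (uxx e x t) 0 with h | h <;> nlinarith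
  nlinarith [hsol.pde e x hx' t ht']

theorem le_of_initial_boundary_le (hne : ∀ e, src e ≠ tgt e) (hℓ : ∀ e, 0 < ℓ e)
    (ha : ∀ e, 0 < a e) (hb : ∀ e, 0 < b e) (heps : ∀ e, 0 < eps e ∧ eps e ≤ 1)
    (hflow : ∀ v : V, 2 ≤ edgeDeg src tgt v → ∑ e, b e * inc src tgt e v = 0)
    {lam L K : ℝ} (hlam : ∀ e, b e + 2 / ℓ e < a e * lam) (hL : ∀ e, ℓ e ≤ L)
    (hK₀ : ∀ e, ∀ x ∈ Icc 0 (ℓ e), u e x 0 ≤ K)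
    (hKg : ∀ v, edgeDeg src tgt v = 1 → ∀ t ∈ Icc 0 T, uhat v t ≤ K)
    {e : E} {x t : ℝ} (hx : x ∈ Icc 0 (ℓ e)) (ht : t ∈ Icc 0 T) :
    u e x t ≤ K + L / 4 + lam * T := by
  have : Nonempty E := ⟨e⟩
  obtain ⟨e₀, ⟨x₀, t₀⟩, ⟨hx₀ : x₀ ∈ Icc 0 (ℓ e₀), ht₀ : t₀ ∈ Icc 0 T⟩, hmax⟩ :=
    exists_forall_le_of_isCompact
    (f := fun e (p : ℝ × ℝ) => u e p.1 p.2 - parabola (ℓ e) p.1 - lam * p.2)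
    (fun e => isCompact_Icc.prod isCompact_Icc)
    (fun e => (Set.nonempty_Icc.2 (hℓ e).le).prod (Set.nonempty_Icc.2 (ht.1.trans ht.2)))
    (fun e => ((hsol.cont_u e).sub (by fun_prop)).sub (by fun_prop))
  have hmax' : ∀ e, ∀ x ∈ Icc 0 (ℓ e), ∀ t ∈ Icc 0 T, u e x t - parabola (ℓ e) x - lam * t ≤
      u e₀ x₀ t₀ - parabola (ℓ e₀) x₀ - lam * t₀ := fun e x hx t ht => hmax e (x, t) ⟨hx, ht⟩
  have hlam₀ : 0 ≤ lam := (pos_of_mul_pos_right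
    ((add_pos (hb e) (div_pos two_pos (hℓ e))).trans (hlam e)) (ha e).le).le
  have hL₀ : 0 ≤ L := (hℓ e).le.trans (hL e)
  suffices hw₀ : u e₀ x₀ t₀ - parabola (ℓ e₀) x₀ - lam * t₀ ≤ K + L / 4 by
    nlinarith [hmax' e x hx t ht, parabola_nonpos hx, ht.2]
  rcases ht₀.1.eq_or_lt with rfl | ht₀_pos
  · linarith [hK₀ e₀ x₀ hx₀, neg_quarter_le_parabola (hℓ e₀) x₀, hL e₀]
  have hvertex : ∀ v, (src e₀ = v ∨ tgt e₀ = v) → x₀ = endCoord src ℓ e₀ v →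
      u e₀ x₀ t₀ - parabola (ℓ e₀) x₀ - lam * t₀ ≤ K + L / 4 := by
    rintro v hev rfl
    rw [hsol.vertex_continuity v e₀ hev t₀ ht₀, parabola_endCoord]
    rcases (one_le_edgeDeg hev).eq_or_lt with hdeg | hdeg
    · nlinarith [hKg v hdeg.symm t₀ ht₀]
    refine (hsol.false_of_max_at_inner_vertex hne hℓ (fun e => (heps e).1) (hflow v hdeg) hdeg
      ht₀ fun e y hy => ?_).elim
    have h := hmax' e y hy t₀ ht₀
    rw [hsol.vertex_continuity v e₀ hev t₀ ht₀, parabola_endCoord] at h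
    linarith
  rcases hx₀.1.eq_or_lt with rfl | hx₀_pos
  · exact hvertex (src e₀) (Or.inl rfl) (by simp [endCoord])
  rcases hx₀.2.eq_or_lt with rfl | hx₀_lt
  · exact hvertex (tgt e₀) (Or.inr rfl) (by simp [endCoord, hne e₀])
  refine (hsol.false_of_interior_max (hℓ e₀) (ha e₀) (hb e₀) ⟨(heps e₀).1.le, (heps e₀).2⟩
    (hlam e₀) ⟨hx₀_pos, hx₀_lt⟩ ⟨ht₀_pos, ht₀.2⟩ (isMaxOn_iff.2 fun y hy => ?_)
    (isMaxOn_iff.2 fun s hs => ?_)).elim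
  · linarith [hmax' e₀ y hy t₀ ht₀]
  · linarith [hmax' e₀ x₀ hx₀ s hs]

theorem abs_le_of_initial_boundary_abs_le (hne : ∀ e, src e ≠ tgt e) (hℓ : ∀ e, 0 < ℓ e)
    (ha : ∀ e, 0 < a e) (hb : ∀ e, 0 < b e) (heps : ∀ e, 0 < eps e ∧ eps e ≤ 1)
    (hflow : ∀ v : V, 2 ≤ edgeDeg src tgt v → ∑ e, b e * inc src tgt e v = 0)
    {lam L K : ℝ} (hlam : ∀ e, b e + 2 / ℓ e < a e * lam) (hL : ∀ e, ℓ e ≤ L)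
    (hK₀ : ∀ e, ∀ x ∈ Icc 0 (ℓ e), |u e x 0| ≤ K)
    (hKg : ∀ v, edgeDeg src tgt v = 1 → ∀ t ∈ Icc 0 T, |uhat v t| ≤ K)
    {e : E} {x t : ℝ} (hx : x ∈ Icc 0 (ℓ e)) (ht : t ∈ Icc 0 T) :
    |u e x t| ≤ K + L / 4 + lam * T := by
  have hlower := (hsol.const_mul (-1)).le_of_initial_boundary_le hne hℓ ha hb heps hflow hlam hL
    (fun e x hx => by linarith [neg_abs_le (u e x 0), hK₀ e x hx])
    (fun v hv t ht => by linarith [neg_abs_le (uhat v t), hKg v hv t ht]) hx ht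
  have hupper := hsol.le_of_initial_boundary_le hne hℓ ha hb heps hflow hlam hL
    (fun e x hx => (abs_le.1 (hK₀ e x hx)).2) (fun v hv t ht => (abs_le.1 (hKg v hv t ht)).2)
    hx ht
  exact abs_le.2 ⟨by linarith, hupper⟩

theorem abs_sub_le_of_initial_boundary_le (hne : ∀ e, src e ≠ tgt e) (hℓ : ∀ e, 0 < ℓ e)
    (ha : ∀ e, 0 < a e) (hb : ∀ e, 0 < b e) (heps : ∀ e, 0 < eps e ∧ eps e ≤ 1)
    (hflow : ∀ v : V, 2 ≤ edgeDeg src tgt v → ∑ e, b e * inc src tgt e v = 0)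
    {lam L K : ℝ} (hlam : ∀ e, b e + 2 / ℓ e < a e * lam) (hL : ∀ e, ℓ e ≤ L)
    {h : ℝ} (hh : 0 < h)
    (hK₀ : ∀ e, ∀ x ∈ Icc 0 (ℓ e), |u e x h - u e x 0| ≤ K * h)
    (hKg : ∀ v, edgeDeg src tgt v = 1 → ∀ t ∈ Icc 0 (T - h), |uhat v (t + h) - uhat v t| ≤ K * h)
    {e : E} {x t : ℝ} (hx : x ∈ Icc 0 (ℓ e)) (ht : t ∈ Icc 0 (T - h)) :
    |u e x (t + h) - u e x t| ≤ (K + L / 4 + lam * T) * h := by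
  have hquot := ((hsol.comp_add_const hh.le).sub (hsol.mono (by linarith))).const_mul h⁻¹
  have hbound := hquot.abs_le_of_initial_boundary_abs_le hne hℓ ha hb heps hflow hlam hL
    (K := K) (fun e x hx => ?_) (fun v hv t ht => ?_) hx ht
  · have hlam₀ : 0 ≤ lam := (pos_of_mul_pos_right
      ((add_pos (hb e) (div_pos two_pos (hℓ e))).trans (hlam e)) (ha e).le).le
    rw [abs_mul, abs_inv, abs_of_pos hh, inv_mul_le_iff₀ hh] at hbound
    nlinarith [mul_nonneg (mul_nonneg hlam₀ hh.le) hh.le]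
  · rw [abs_mul, abs_inv, abs_of_pos hh, inv_mul_le_iff₀ hh, zero_add, mul_comm]
    exact hK₀ e x hx
  · rw [abs_mul, abs_inv, abs_of_pos hh, inv_mul_le_iff₀ hh, mul_comm]
    exact hKg v hv t ht

/-- For small steps the initial time difference quotients are close to `uₜ(·, 0)`, by uniform
continuity of `uₜ`. -/
theorem abs_ut_le (hut : ∀ e, ContinuousOn (fun p : ℝ × ℝ => ut e p.1 p.2) (Icc 0 (ℓ e) ×ˢ Icc 0 T))
    (hT : 0 < T) (hne : ∀ e, src e ≠ tgt e) (hℓ : ∀ e, 0 < ℓ e)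
    (ha : ∀ e, 0 < a e) (hb : ∀ e, 0 < b e) (heps : ∀ e, 0 < eps e ∧ eps e ≤ 1)
    (hflow : ∀ v : V, 2 ≤ edgeDeg src tgt v → ∑ e, b e * inc src tgt e v = 0)
    {lam L K : ℝ} (hlam : ∀ e, b e + 2 / ℓ e < a e * lam) (hL : ∀ e, ℓ e ≤ L)
    (hK₀ : ∀ e, ∀ x ∈ Icc 0 (ℓ e), |ut e x 0| ≤ K)
    (hKg : ∀ v, edgeDeg src tgt v = 1 → ∀ s ∈ Icc 0 T, ∀ t ∈ Icc 0 T,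
      |uhat v s - uhat v t| ≤ K * |s - t|)
    {e : E} {x t : ℝ} (hx : x ∈ Icc 0 (ℓ e)) (ht : t ∈ Icc 0 T) :
    |ut e x t| ≤ K + L / 4 + lam * T := by
  refine le_of_forall_pos_le_add fun η hη => ?_
  obtain ⟨δ, hδ, hnear⟩ := exists_pos_forall_abs_le_add hut hT.le hη hK₀
  have hstep : ∀ h, 0 < h → h < δ → ∀ r ∈ Icc 0 (T - h),
      |u e x (r + h) - u e x r| ≤ (K + η + L / 4 + lam * T) * h := by
    intro h hh hhδ r hr
    refine hsol.abs_sub_le_of_initial_boundary_le hne hℓ ha hb heps hflow hlam hL hh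
      (fun e' x' hx' => ?_) (fun v hv r' hr' => ?_) hx hr
    · have hsub : Icc 0 h ⊆ Icc 0 T := Icc_subset_Icc_right (by linarith [hr.2, hr.1])
      simpa [Real.norm_eq_abs, abs_of_pos hh] using
        (convex_Icc 0 h).norm_image_sub_le_of_norm_hasDerivWithin_le
          (fun s hs => (hsol.hasDeriv_t e' x' hx' s (hsub hs)).mono hsub)
          (fun s hs => hnear e' x' hx' s (hsub hs) (hs.2.trans_lt hhδ))
          (left_mem_Icc.2 hh.le) (right_mem_Icc.2 hh.le)
    · have hlip := hKg v hv (r' + h) ⟨by linarith [hr'.1], by linarith [hr'.2]⟩ r'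
        ⟨hr'.1, by linarith [hr'.2]⟩
      rw [add_sub_cancel_left, abs_of_pos hh] at hlip
      nlinarith
  suffices |ut e x t| ≤ K + η + L / 4 + lam * T by linarith
  refine (hsol.hasDeriv_t e x hx t ht).abs_le_of_eventually_abs_slope_le
    (uniqueDiffOn_Icc hT t ht).accPt ?_
  filter_upwards [self_mem_nhdsWithin, nhdsWithin_le_nhds (Metric.ball_mem_nhds t hδ)]
    with s ⟨hs, hst⟩ hsδ
  rw [Metric.mem_ball, Real.dist_eq] at hsδ
  have hst' : s - t ≠ 0 := sub_ne_zero.2 hst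
  rw [slope_def_field, abs_div, div_le_iff₀ (abs_pos.2 hst')]
  rcases lt_or_gt_of_ne hst with hlt | hgt
  · have h := hstep (t - s) (by linarith) (by rwa [abs_sub_comm, abs_of_pos (by linarith)] at hsδ)
      s ⟨hs.1, by linarith [ht.2]⟩
    rwa [add_sub_cancel, abs_sub_comm, ← abs_of_pos (by linarith : 0 < t - s), abs_sub_comm t s]
      at h
  · have h := hstep (s - t) (by linarith) (by rwa [abs_of_pos (by linarith)] at hsδ)
      t ⟨ht.1, by linarith [hs.2]⟩
    rwa [add_sub_cancel, ← abs_of_pos (by linarith : 0 < s - t)] at h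

end IsNetworkSolution

end NetworkSolution

namespace CDSol

variable {E V : Type} [Fintype E] [Fintype V] [DecidableEq E] [DecidableEq V] {src tgt : E → V}
  {ℓ a b eps : E → ℝ} {T : ℝ} {u0 : E → ℝ → ℝ} {g : V → ℝ → ℝ}
  (sol : CDSol E V src tgt ℓ a b eps T u0 g)

theorem isNetworkSolution :
    IsNetworkSolution src tgt ℓ a b eps T sol.u sol.ux sol.uxx sol.ut sol.uhat :=
  ⟨sol.cont_u, sol.hasDeriv_x, sol.hasDeriv_xx, sol.hasDeriv_t, sol.pde, sol.vertex_continuity,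
    sol.coupling⟩

theorem abs_mul_ut_zero_le (hT : 0 ≤ T) {e : E} (hℓ : 0 < ℓ e) (heps : 0 ≤ eps e ∧ eps e ≤ 1)
    {x : ℝ} (hx : x ∈ Icc 0 (ℓ e)) :
    |a e * sol.ut e x 0| ≤ |derivWithin (derivWithin (u0 e) (Icc 0 (ℓ e))) (Icc 0 (ℓ e)) x|
      + |b e| * |derivWithin (u0 e) (Icc 0 (ℓ e)) x| := by
  have h0 : (0 : ℝ) ∈ Icc 0 T := ⟨le_rfl, hT⟩
  have hud := uniqueDiffOn_Icc hℓ
  have hux : ∀ y ∈ Icc 0 (ℓ e), sol.ux e y 0 = derivWithin (u0 e) (Icc 0 (ℓ e)) y :=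
    fun y hy => (((sol.hasDeriv_x e 0 h0 y hy).congr (fun z hz => (sol.init e z hz).symm)
      (sol.init e y hy).symm).derivWithin (hud y hy)).symm
  have huxx : sol.uxx e x 0 = derivWithin (derivWithin (u0 e) (Icc 0 (ℓ e))) (Icc 0 (ℓ e)) x :=
    (((sol.hasDeriv_xx e 0 h0 x hx).congr (fun z hz => (hux z hz).symm)
      (hux x hx).symm).derivWithin (hud x hx)).symm
  have hpde : a e * sol.ut e x 0 = eps e * sol.uxx e x 0 - b e * sol.ux e x 0 := by
    linarith [sol.pde e x hx 0 h0]
  rw [← hux x hx, ← huxx, hpde]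
  calc _ ≤ |eps e * sol.uxx e x 0| + |b e * sol.ux e x 0| := abs_sub _ _
    _ ≤ _ := by
      rw [abs_mul, abs_mul, abs_of_nonneg heps.1]
      gcongr
      exact mul_le_of_le_one_left (abs_nonneg _) heps.2

end CDSol

theorem exists_abs_ut_zero_le {E V : Type} [Fintype E] [Fintype V] [DecidableEq E]
    [DecidableEq V] {src tgt : E → V} {ℓ a b : E → ℝ} {T : ℝ} {u0 : E → ℝ → ℝ} {g : V → ℝ → ℝ}
    (hT : 0 ≤ T) (hℓ : ∀ e, 0 < ℓ e) (ha : ∀ e, 0 < a e)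
    (hu0 : ∀ e, ContDiffOn ℝ 2 (u0 e) (Icc 0 (ℓ e))) :
    ∃ K, ∀ eps : E → ℝ, (∀ e, 0 < eps e ∧ eps e ≤ 1) →
      ∀ sol : CDSol E V src tgt ℓ a b eps T u0 g, ∀ e, ∀ x ∈ Icc 0 (ℓ e), |sol.ut e x 0| ≤ K := by
  have hud e := uniqueDiffOn_Icc (hℓ e)
  obtain ⟨D₁, hD₁⟩ := exists_abs_le_of_continuousOn
    fun e => (hu0 e).continuousOn_derivWithin (hud e) (by norm_num)
  obtain ⟨D₂, hD₂⟩ := exists_abs_le_of_continuousOn fun e =>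
    ((hu0 e).derivWithin (m := 1) (hud e) (by norm_num)).continuousOn_derivWithin (hud e) le_rfl
  obtain ⟨K, hK⟩ := Finite.exists_le fun e => (D₂ + |b e| * D₁) / a e
  refine ⟨K, fun eps heps sol e x hx => (hK e).trans' ?_⟩
  rw [le_div_iff₀ (ha e), mul_comm, ← abs_of_pos (ha e), ← abs_mul]
  calc _ ≤ _ := sol.abs_mul_ut_zero_le hT (hℓ e) ⟨(heps e).1.le, (heps e).2⟩ hx
    _ ≤ D₂ + |b e| * D₁ := by gcongr; exacts [hD₂ e x hx, hD₁ e x hx]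

theorem cd_uniform_bounds_general
    (E V : Type) [Fintype E] [Fintype V] [DecidableEq E] [DecidableEq V]
    (src tgt : E → V) (hne : ∀ e, src e ≠ tgt e)
    (ℓ a b : E → ℝ) (T : ℝ) (hT : 0 < T)
    (hℓ : ∀ e, 0 < ℓ e) (ha : ∀ e, 0 < a e) (hb : ∀ e, 0 < b e)
    (hflow : ∀ v : V, 2 ≤ edgeDeg src tgt v → ∑ e, b e * inc src tgt e v = 0)
    (u0 : E → ℝ → ℝ) (hu0 : ∀ e, ContDiffOn ℝ 2 (u0 e) (Set.Icc 0 (ℓ e)))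
    (g : V → ℝ → ℝ) (hg : ∀ v, ContDiffOn ℝ 2 (g v) (Set.Icc 0 T)) :
    ∃ C : ℝ, ∀ eps : E → ℝ, (∀ e, 0 < eps e ∧ eps e ≤ 1) →
      ∀ sol : CDSol E V src tgt ℓ a b eps T u0 g,
        ∀ e, ∀ x ∈ Set.Icc (0 : ℝ) (ℓ e), ∀ t ∈ Set.Icc (0 : ℝ) T,
          |sol.u e x t| + |sol.ut e x t| ≤ C := by
  obtain ⟨lam, hlam⟩ := exists_lt_mul_of_pos (fun e => b e + 2 / ℓ e) ha
  obtain ⟨L, hL⟩ := Finite.exists_le ℓ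
  obtain ⟨K₀, hK₀⟩ := exists_abs_le_of_continuousOn fun e => (hu0 e).continuousOn
  obtain ⟨Kg, hKg⟩ := exists_abs_le_of_continuousOn (ℓ := fun _ => T) fun v => (hg v).continuousOn
  obtain ⟨K₁, hK₁⟩ := exists_abs_ut_zero_le (src := src) (tgt := tgt) (b := b) (g := g)
    hT.le hℓ ha hu0
  obtain ⟨Dg, hDg⟩ := exists_abs_sub_le_mul_of_contDiffOn hT fun v => (hg v).of_le one_le_two
  refine ⟨(max K₀ Kg + L / 4 + lam * T) + (max K₁ Dg + L / 4 + lam * T),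
    fun eps heps sol e x hx t ht => ?_⟩
  have hsol := sol.isNetworkSolution
  have hu := hsol.abs_le_of_initial_boundary_abs_le hne hℓ ha hb heps hflow hlam hL
    (fun e x hx => sol.init e x hx ▸ (hK₀ e x hx).trans (le_max_left _ _))
    (fun v hv t ht => sol.bdry v hv t ht ▸ (hKg v t ht).trans (le_max_right _ _)) hx ht
  have hut := hsol.abs_ut_le sol.cont_ut hT hne hℓ ha hb heps hflow hlam hL
    (fun e x hx => (hK₁ eps heps sol e x hx).trans (le_max_left _ _))
    (fun v hv s hs r hr => by
      rw [sol.bdry v hv s hs, sol.bdry v hv r hr]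
      exact (hDg v s hs r hr).trans (by gcongr; exact le_max_right _ _)) hx ht
  linarith

/-- **Lemma 3.2 (uniform bounds independent of ε).**  For fixed network, coefficients
`a`, `b`, initial data `u0`, boundary data `g` and horizon `T`, there is a constant
`C_u`, independent of the diffusion coefficients `ε ∈ (0,1]`, such that every classical
solution of the convection–diffusion network problem satisfies
`|u_ε| + |∂ₜ u_ε| ≤ C_u` on the whole space-time domain. -/
theorem cd_uniform_bounds
    (E V : Type) [Fintype E] [Fintype V] [DecidableEq E] [DecidableEq V]
    (src tgt : E → V) (hne : ∀ e, src e ≠ tgt e)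
    (ℓ a b : E → ℝ) (T : ℝ) (hT : 0 < T)
    (hℓ : ∀ e, 0 < ℓ e) (ha : ∀ e, 0 < a e) (hb : ∀ e, 0 < b e)
    (hdeg : ∀ v : V, 1 ≤ edgeDeg src tgt v)
    (hflow : ∀ v : V, 2 ≤ edgeDeg src tgt v → ∑ e, b e * inc src tgt e v = 0)
    (u0 : E → ℝ → ℝ) (hu0 : ∀ e, ContDiffOn ℝ 2 (u0 e) (Set.Icc 0 (ℓ e)))
    (uhat0 : V → ℝ)
    (hu0cont : ∀ (v : V) (e : E), (src e = v ∨ tgt e = v) →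
      u0 e (endCoord src ℓ e v) = uhat0 v)
    (g : V → ℝ → ℝ) (hg : ∀ v, ContDiffOn ℝ 2 (g v) (Set.Icc 0 T))
    (hcompat : ∀ v : V, edgeDeg src tgt v = 1 → g v 0 = uhat0 v) :
    ∃ C : ℝ, ∀ eps : E → ℝ, (∀ e, 0 < eps e ∧ eps e ≤ 1) →
      ∀ sol : CDSol E V src tgt ℓ a b eps T u0 g,
        ∀ e, ∀ x ∈ Set.Icc (0 : ℝ) (ℓ e), ∀ t ∈ Set.Icc (0 : ℝ) T,
          |sol.u e x t| + |sol.ut e x t| ≤ C :=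
  cd_uniform_bounds_general E V src tgt hne ℓ a b T hT hℓ ha hb hflow u0 hu0 g hg
end

section
/- Barrier bound on each edge (key step in the proof of Lemma 3.3): Under the hypotheses of Lemma 3.2, let C_u be the uniform bound with |u_ε^e(x,t)| + |∂_t u_ε^e(x,t)| ≤ C_u and let K be any constant with K ≥ (a^e/b^e)C_u for all e ∈ E, K ≥ max_{x∈E} |∂_x u₀(x)|, and K ≥ 2C_u / min_{e∈E} ℓ^e. Then the classical solution u_ε of the convection–diffusion network problem satisfies u_ε^e(x,t) − û_ε^{v_i^e}(t) ≤ K x for all x ∈ [0,ℓ^e], all edges e ∈ E, and all t ∈ [0,T], where v_i^e is the start vertex of e and û_ε^{v_i^e}(t) = u_ε^e(0,t) the common nodal value there. -/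
/-!
Maximum principle for the barrier `w(x,t) = u(x,t) - u(0,t) - K x - δ t` on `[0,ℓ] × [0,T]`.
On the parabolic boundary `w ≤ 0`: trivially at `x = 0`, at `x = ℓ` because `|u| ≤ C_u` and
`K ℓ ≥ 2 C_u`, at `t = 0` by the mean value theorem and `K ≥ |u₀'|`. At a maximum with
`0 < x < ℓ` and `t > 0` we would have `uₓ = K`, `uₓₓ ≤ 0` and `uₜ(x,t) ≥ uₜ(0,t) + δ`, so the PDE
gives `ε uₓₓ = a uₜ + b K ≥ a (uₜ(0,t) + C_u) + a δ > 0` since `b K ≥ a C_u`, a contradiction.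
Letting `δ → 0` gives the bound.
-/

open Set Finset

open Filter Topology

theorem IsLocalMaxOn.nonneg_of_hasDerivWithinAt_Icc {g : ℝ → ℝ} {a b t c : ℝ}
    (h : IsLocalMaxOn g (Icc a b) t) (ht : t ∈ Ioc a b)
    (hg : HasDerivWithinAt g c (Icc a b) t) : 0 ≤ c := by
  have hseg : segment ℝ t a ⊆ Icc a b := by
    rw [segment_symm, segment_eq_Icc ht.1.le]
    exact Icc_subset_Icc_right ht.2
  have hc := h.hasFDerivWithinAt_nonpos hg.hasFDerivWithinAt
    (sub_mem_posTangentConeAt_of_segment_subset hseg)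
  simp only [ContinuousLinearMap.toSpanSingleton_apply, smul_eq_mul] at hc
  nlinarith [ht.1]

theorem IsLocalMax.nonpos_of_hasDerivAt_of_hasDerivAt {f f' : ℝ → ℝ} {x₀ c : ℝ}
    (h : IsLocalMax f x₀) (hf : ∀ᶠ x in 𝓝 x₀, HasDerivAt f (f' x) x)
    (hf' : HasDerivAt f' c x₀) : c ≤ 0 := by
  by_contra! hc
  have hderiv : deriv f =ᶠ[𝓝 x₀] f' := hf.mono fun x hx => hx.deriv
  have hderiv2 : deriv (deriv f) x₀ = c := (hf'.congr_of_eventuallyEq hderiv).deriv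
  -- by the second derivative test `x₀` is also a local minimum, so `f` is locally constant
  have hmin : IsLocalMin f x₀ := isLocalMin_of_deriv_deriv_pos (hderiv2 ▸ hc) h.deriv_eq_zero
    hf.self_of_nhds.continuousAt
  have hconst : f =ᶠ[𝓝 x₀] fun _ => f x₀ := (h.and hmin).mono fun x hx => le_antisymm hx.1 hx.2
  have hflat : deriv f =ᶠ[𝓝 x₀] fun _ => 0 := hconst.deriv.trans (by simp)
  rw [hflat.deriv_eq, deriv_const] at hderiv2
  exact hc.ne hderiv2

namespace CDSol

variable {E V : Type} [Fintype E] [Fintype V] [DecidableEq E] [DecidableEq V]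
  {src tgt : E → V} {ℓ a b eps : E → ℝ} {T : ℝ} {u0 : E → ℝ → ℝ} {g : V → ℝ → ℝ}
  (sol : CDSol E V src tgt ℓ a b eps T u0 g) {e : E}

theorem uhat_src {t : ℝ} (ht : t ∈ Icc 0 T) : sol.uhat (src e) t = sol.u e 0 t := by
  simpa [endCoord] using (sol.vertex_continuity (src e) e (Or.inl rfl) t ht).symm

theorem u_sub_u_zero_le_of_init {K x : ℝ} (hℓ : 0 < ℓ e) (hT : 0 ≤ T)
    (hK : ∀ y ∈ Icc 0 (ℓ e), |derivWithin (u0 e) (Icc 0 (ℓ e)) y| ≤ K)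
    (hx : x ∈ Icc 0 (ℓ e)) : sol.u e x 0 - sol.u e 0 0 ≤ K * x := by
  have hder : ∀ y ∈ Icc 0 (ℓ e),
      HasDerivWithinAt (fun z => sol.u e z 0) (sol.ux e y 0) (Icc 0 (ℓ e)) y :=
    sol.hasDeriv_x e 0 ⟨le_rfl, hT⟩
  have hbound : ∀ y ∈ Icc 0 (ℓ e), ‖sol.ux e y 0‖ ≤ K := fun y hy => by
    have hu0 : HasDerivWithinAt (u0 e) (sol.ux e y 0) (Icc 0 (ℓ e)) y :=
      (hder y hy).congr (fun z hz => (sol.init e z hz).symm) (sol.init e y hy).symm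
    rw [Real.norm_eq_abs, ← hu0.derivWithin (uniqueDiffOn_Icc hℓ y hy)]
    exact hK y hy
  have hmvt := (convex_Icc 0 (ℓ e)).norm_image_sub_le_of_norm_hasDerivWithin_le hder hbound
    (left_mem_Icc.2 hℓ.le) hx
  rw [Real.norm_eq_abs, Real.norm_eq_abs, sub_zero, abs_of_nonneg hx.1] at hmvt
  exact (le_abs_self _).trans hmvt

def barrier (e : E) (K δ : ℝ) (p : ℝ × ℝ) : ℝ :=
  sol.u e p.1 p.2 - sol.u e 0 p.2 - K * p.1 - δ * p.2

theorem continuousOn_barrier (K δ : ℝ) :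
    ContinuousOn (sol.barrier e K δ) (Icc 0 (ℓ e) ×ˢ Icc 0 T) := by
  intro p hp
  have hu0 : ContinuousOn (fun q : ℝ × ℝ => sol.u e 0 q.2) (Icc 0 (ℓ e) ×ˢ Icc 0 T) :=
    (sol.cont_u e).comp (f := fun q : ℝ × ℝ => ((0 : ℝ), q.2)) (by fun_prop)
      fun q hq => ⟨left_mem_Icc.2 (hp.1.1.trans hp.1.2), hq.2⟩
  exact ((((sol.cont_u e).sub hu0).sub (by fun_prop)).sub (by fun_prop)) p hp

theorem hasDerivWithinAt_barrier_fst (K δ : ℝ) {x t : ℝ} (hx : x ∈ Icc 0 (ℓ e))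
    (ht : t ∈ Icc 0 T) :
    HasDerivWithinAt (fun y => sol.barrier e K δ (y, t)) (sol.ux e x t - K) (Icc 0 (ℓ e)) x := by
  simpa [barrier] using (((sol.hasDeriv_x e t ht x hx).sub_const _).sub
    ((hasDerivWithinAt_id x _).const_mul K)).sub_const (δ * t)

theorem hasDerivWithinAt_barrier_snd (K δ : ℝ) {x t : ℝ} (hx : x ∈ Icc 0 (ℓ e))
    (ht : t ∈ Icc 0 T) :
    HasDerivWithinAt (fun s => sol.barrier e K δ (x, s))
      (sol.ut e x t - sol.ut e 0 t - δ) (Icc 0 T) t := by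
  have h0 : (0 : ℝ) ∈ Icc 0 (ℓ e) := left_mem_Icc.2 (hx.1.trans hx.2)
  have h := (((sol.hasDeriv_t e x hx t ht).sub (sol.hasDeriv_t e 0 h0 t ht)).sub_const
    (K * x)).sub ((hasDerivWithinAt_id t (Icc 0 T)).const_mul δ)
  rw [mul_one] at h
  exact h

theorem not_isMaxOn_barrier {K δ x t : ℝ} (hx : x ∈ Ioo 0 (ℓ e)) (ht : t ∈ Ioc 0 T)
    (ha : 0 < a e) (heps : 0 < eps e) (hδ : 0 < δ)
    (hK : 0 ≤ a e * sol.ut e 0 t + b e * K) :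
    ¬ IsMaxOn (sol.barrier e K δ) (Icc 0 (ℓ e) ×ˢ Icc 0 T) (x, t) := by
  intro hmax
  have hxI : x ∈ Icc 0 (ℓ e) := Ioo_subset_Icc_self hx
  have htI : t ∈ Icc 0 T := Ioc_subset_Icc_self ht
  have hderx : ∀ᶠ y in 𝓝 x,
      HasDerivAt (fun y => sol.barrier e K δ (y, t)) (sol.ux e y t - K) y := by
    filter_upwards [Ioo_mem_nhds hx.1 hx.2] with y hy
    exact (sol.hasDerivWithinAt_barrier_fst K δ (Ioo_subset_Icc_self hy) htI).hasDerivAt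
      (Icc_mem_nhds hy.1 hy.2)
  have hlocx : IsLocalMax (fun y => sol.barrier e K δ (y, t)) x :=
    Filter.mem_of_superset (Icc_mem_nhds hx.1 hx.2) fun y hy => hmax ⟨hy, htI⟩
  have hux : sol.ux e x t = K := sub_eq_zero.1 (hlocx.hasDerivAt_eq_zero hderx.self_of_nhds)
  have huxx : sol.uxx e x t ≤ 0 := hlocx.nonpos_of_hasDerivAt_of_hasDerivAt hderx
    (((sol.hasDeriv_xx e t htI x hxI).sub_const K).hasDerivAt (Icc_mem_nhds hx.1 hx.2))
  have hut : δ ≤ sol.ut e x t - sol.ut e 0 t := by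
    have hloct : IsLocalMaxOn (fun s => sol.barrier e K δ (x, s)) (Icc 0 T) t :=
      Filter.mem_of_superset self_mem_nhdsWithin fun s hs => hmax ⟨hxI, hs⟩
    linarith [hloct.nonneg_of_hasDerivWithinAt_Icc ht
      (sol.hasDerivWithinAt_barrier_snd K δ hxI htI)]
  have hpde := sol.pde e x hxI t htI
  rw [hux] at hpde
  nlinarith [mul_le_mul_of_nonneg_left hut ha.le, mul_pos ha hδ,
    mul_nonpos_of_nonneg_of_nonpos heps.le huxx]

theorem barrier_nonpos {Cu K δ : ℝ} (hℓ : 0 < ℓ e) (ha : 0 < a e) (heps : 0 < eps e)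
    (hδ : 0 < δ) (hCu : ∀ x ∈ Icc 0 (ℓ e), ∀ t ∈ Icc 0 T, |sol.u e x t| + |sol.ut e x t| ≤ Cu)
    (hK1 : a e * Cu ≤ b e * K)
    (hK2 : ∀ x ∈ Icc 0 (ℓ e), |derivWithin (u0 e) (Icc 0 (ℓ e)) x| ≤ K)
    (hK3 : 2 * Cu ≤ K * ℓ e) {p : ℝ × ℝ} (hp : p ∈ Icc 0 (ℓ e) ×ˢ Icc 0 T) :
    sol.barrier e K δ p ≤ 0 := by
  obtain ⟨⟨x, t⟩, ⟨hx, ht⟩, hmax⟩ := (isCompact_Icc.prod isCompact_Icc).exists_isMaxOn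
    ⟨p, hp⟩ (sol.continuousOn_barrier K δ)
  have h0 : (0 : ℝ) ∈ Icc 0 (ℓ e) := left_mem_Icc.2 hℓ.le
  have habs_u : ∀ y ∈ Icc 0 (ℓ e), |sol.u e y t| ≤ Cu := fun y hy => by
    linarith [hCu y hy t ht, abs_nonneg (sol.ut e y t)]
  refine (hmax hp).trans ?_
  simp only [barrier]
  have hδt : 0 ≤ δ * t := mul_nonneg hδ.le ht.1
  rcases hx.1.eq_or_lt with rfl | hx0
  · linarith
  rcases hx.2.eq_or_lt with rfl | hxℓ
  · linarith [(abs_le.1 (habs_u _ hx)).2, (abs_le.1 (habs_u 0 h0)).1]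
  rcases ht.1.eq_or_lt with rfl | ht0
  · linarith [sol.u_sub_u_zero_le_of_init hℓ ht.2 hK2 hx]
  have hut0 := abs_le.1 ((le_add_of_nonneg_left (abs_nonneg _)).trans (hCu 0 h0 t ht))
  exact absurd hmax (sol.not_isMaxOn_barrier ⟨hx0, hxℓ⟩ ⟨ht0, ht.2⟩ ha heps hδ
    (by linarith [mul_le_mul_of_nonneg_left hut0.1 ha.le]))

end CDSol

theorem cd_barrier_bound_general
    (E V : Type) [Fintype E] [Fintype V] [DecidableEq E] [DecidableEq V]
    (src tgt : E → V)
    (ℓ a b eps : E → ℝ) (T : ℝ)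
    (hℓ : ∀ e, 0 < ℓ e) (ha : ∀ e, 0 < a e) (hb : ∀ e, 0 < b e)
    (heps : ∀ e, 0 < eps e ∧ eps e ≤ 1)
    (u0 : E → ℝ → ℝ)
    (g : V → ℝ → ℝ)
    (sol : CDSol E V src tgt ℓ a b eps T u0 g)
    (Cu : ℝ)
    (hCu : ∀ e, ∀ x ∈ Set.Icc (0 : ℝ) (ℓ e), ∀ t ∈ Set.Icc (0 : ℝ) T,
      |sol.u e x t| + |sol.ut e x t| ≤ Cu)
    (K : ℝ)
    (hK1 : ∀ e, a e / b e * Cu ≤ K)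
    (hK2 : ∀ e, ∀ x ∈ Set.Icc (0 : ℝ) (ℓ e),
      |derivWithin (u0 e) (Set.Icc 0 (ℓ e)) x| ≤ K)
    (hK3 : ∀ e, 2 * Cu / ℓ e ≤ K) :
    ∀ e, ∀ x ∈ Set.Icc (0 : ℝ) (ℓ e), ∀ t ∈ Set.Icc (0 : ℝ) T,
      sol.u e x t - sol.uhat (src e) t ≤ K * x := by
  intro e x hx t ht
  have hK1' : a e * Cu ≤ b e * K := by
    have h := hK1 e
    rw [div_mul_eq_mul_div, div_le_iff₀' (hb e)] at h
    exact h
  have hK3' : 2 * Cu ≤ K * ℓ e := (div_le_iff₀ (hℓ e)).1 (hK3 e)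
  have hδ : ∀ δ > 0, sol.u e x t - sol.u e 0 t - K * x ≤ δ * t := fun δ hδ => by
    have hw := sol.barrier_nonpos (hℓ e) (ha e) (heps e).1 hδ (hCu e) hK1' (hK2 e) hK3'
      (p := (x, t)) ⟨hx, ht⟩
    simp only [CDSol.barrier] at hw
    linarith
  have hlim : Tendsto (fun δ : ℝ => δ * t) (𝓝[>] 0) (𝓝 0) := by
    simpa using ((continuous_mul_const t).tendsto 0).mono_left nhdsWithin_le_nhds
  rw [sol.uhat_src ht, ← sub_nonpos]
  exact ge_of_tendsto hlim (eventually_mem_nhdsWithin.mono hδ)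

/-- **Barrier bound on each edge** (key step in the proof of Lemma 3.3).  Under the
hypotheses of Lemma 3.2, if `C_u` bounds `|u_ε| + |∂ₜu_ε|` and `K` satisfies
`K ≥ (aᵉ/bᵉ)C_u` for all edges, `K ≥ max |∂ₓu₀|` and `K ≥ 2C_u/min ℓᵉ`, then
`u_εᵉ(x,t) − û_ε^{vᵢᵉ}(t) ≤ K x` for all `x ∈ [0,ℓᵉ]`, all edges `e` and all
`t ∈ [0,T]`, where `vᵢᵉ = src e` is the start vertex of `e`. -/
theorem cd_barrier_bound
    (E V : Type) [Fintype E] [Fintype V] [DecidableEq E] [DecidableEq V]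
    (src tgt : E → V) (hne : ∀ e, src e ≠ tgt e)
    (ℓ a b eps : E → ℝ) (T : ℝ) (hT : 0 < T)
    (hℓ : ∀ e, 0 < ℓ e) (ha : ∀ e, 0 < a e) (hb : ∀ e, 0 < b e)
    (heps : ∀ e, 0 < eps e ∧ eps e ≤ 1)
    (hdeg : ∀ v : V, 1 ≤ edgeDeg src tgt v)
    (hflow : ∀ v : V, 2 ≤ edgeDeg src tgt v → ∑ e, b e * inc src tgt e v = 0)
    (u0 : E → ℝ → ℝ) (hu0 : ∀ e, ContDiffOn ℝ 2 (u0 e) (Set.Icc 0 (ℓ e)))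
    (uhat0 : V → ℝ)
    (hu0cont : ∀ (v : V) (e : E), (src e = v ∨ tgt e = v) →
      u0 e (endCoord src ℓ e v) = uhat0 v)
    (g : V → ℝ → ℝ) (hg : ∀ v, ContDiffOn ℝ 2 (g v) (Set.Icc 0 T))
    (hcompat : ∀ v : V, edgeDeg src tgt v = 1 → g v 0 = uhat0 v)
    (sol : CDSol E V src tgt ℓ a b eps T u0 g)
    (Cu : ℝ)
    (hCu : ∀ e, ∀ x ∈ Set.Icc (0 : ℝ) (ℓ e), ∀ t ∈ Set.Icc (0 : ℝ) T,
      |sol.u e x t| + |sol.ut e x t| ≤ Cu)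
    (K : ℝ)
    (hK1 : ∀ e, a e / b e * Cu ≤ K)
    (hK2 : ∀ e, ∀ x ∈ Set.Icc (0 : ℝ) (ℓ e),
      |derivWithin (u0 e) (Set.Icc 0 (ℓ e)) x| ≤ K)
    (hK3 : ∀ e, 2 * Cu / ℓ e ≤ K) :
    ∀ e, ∀ x ∈ Set.Icc (0 : ℝ) (ℓ e), ∀ t ∈ Set.Icc (0 : ℝ) T,
      sol.u e x t - sol.uhat (src e) t ≤ K * x :=
  cd_barrier_bound_general E V src tgt ℓ a b eps T hℓ ha hb heps u0 g sol Cu hCu K hK1 hK2 hK3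
end
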